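/- The projective measurement {A₀⊗B₀|₀, A₀⊗B₁|₀, A₁⊗B₀|₁, A₁⊗B₁|₁}, with A₀ = |0⟩⟨0|, A₁ = |1⟩⟨1|, B₀|₀ = |0⟩⟨0|, B₁|₀ = |1⟩⟨1|, B₀|₁ = |ς⟩⟨ς|, B₁|₁ = |ς⊥⟩⟨ς⊥|, perfectly discriminates |Φ₁⟩ and |Φ₂⟩: Tr[(A₀⊗B₀|₀ + A₁⊗B₀|₁)|Φ₁⟩⟨Φ₁|] = 1 and Tr[(A₀⊗B₁|₀ + A₁⊗B₁|₁)|Φ₂⟩⟨Φ₂|] = 1. -/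
import Mathlib


open scoped BigOperators Matrix Kronecker

namespace SSDSE17

noncomputable def varsigma (θ : ℝ) : Fin 2 → ℂ :=
  fun i => if i = 0 then (Real.cos θ : ℂ) else (Real.sin θ : ℂ)

noncomputable def varsigmaPerp (θ : ℝ) : Fin 2 → ℂ :=
  fun i => if i = 0 then (-Real.sin θ : ℂ) else (Real.cos θ : ℂ)

def ket0 : Fin 2 → ℂ := fun i => if i = 0 then 1 else 0
def ket1 : Fin 2 → ℂ := fun i => if i = 1 then 1 else 0

noncomputable def Phi1 (μ θ : ℝ) : Fin 2 × Fin 2 → ℂ :=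
  fun p =>
    (if p.1 = 0 then (if p.2 = 0 then (Real.sqrt μ : ℂ) else 0)
     else (Real.sqrt (1 - μ) : ℂ) * varsigma θ p.2)

noncomputable def Phi2 (μ θ : ℝ) : Fin 2 × Fin 2 → ℂ :=
  fun p =>
    (if p.1 = 0 then (if p.2 = 1 then (Real.sqrt μ : ℂ) else 0)
     else (Real.sqrt (1 - μ) : ℂ) * varsigmaPerp θ p.2)

/-- |u⟩⟨u| for a qubit vector u. -/
noncomputable def outer (u : Fin 2 → ℂ) : Matrix (Fin 2) (Fin 2) ℂ :=
  Matrix.vecMulVec u (star u)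

theorem perfect_discrimination (μ₁ μ₂ θ : ℝ)
    (h₁ : μ₁ ∈ Set.Icc (0:ℝ) 1) (h₂ : μ₂ ∈ Set.Icc (0:ℝ) 1) :
    (((outer ket0 ⊗ₖ outer ket0 + outer ket1 ⊗ₖ outer (varsigma θ)) *
        Matrix.vecMulVec (Phi1 μ₁ θ) (star (Phi1 μ₁ θ))).trace = 1)
    ∧ (((outer ket0 ⊗ₖ outer ket1 + outer ket1 ⊗ₖ outer (varsigmaPerp θ)) *
        Matrix.vecMulVec (Phi2 μ₂ θ) (star (Phi2 μ₂ θ))).trace = 1) := by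
  obtain ⟨h10, h11⟩ := h₁
  obtain ⟨h20, h21⟩ := h₂
  have s1 : (Real.sqrt μ₁ : ℂ) * (Real.sqrt μ₁ : ℂ) = (μ₁ : ℂ) := by
    norm_cast; exact Real.mul_self_sqrt h10
  have s1' : (Real.sqrt (1 - μ₁) : ℂ) * (Real.sqrt (1 - μ₁) : ℂ) = ((1 - μ₁ : ℝ) : ℂ) := by
    norm_cast; exact Real.mul_self_sqrt (by linarith)
  have s2 : (Real.sqrt μ₂ : ℂ) * (Real.sqrt μ₂ : ℂ) = (μ₂ : ℂ) := by
    norm_cast; exact Real.mul_self_sqrt h20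
  have s2' : (Real.sqrt (1 - μ₂) : ℂ) * (Real.sqrt (1 - μ₂) : ℂ) = ((1 - μ₂ : ℝ) : ℂ) := by
    norm_cast; exact Real.mul_self_sqrt (by linarith)
  have pc : (Real.sin θ : ℂ) ^ 2 + (Real.cos θ : ℂ) ^ 2 = 1 := by
    norm_cast; exact Real.sin_sq_add_cos_sq θ
  push_cast at s1' s2'
  constructor
  · simp only [Matrix.trace, Matrix.diag, Matrix.mul_apply, Matrix.add_apply,
      Matrix.kroneckerMap_apply, Matrix.vecMulVec_apply, outer, varsigma, varsigmaPerp,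
      ket0, ket1, Phi1, Phi2, Fin.sum_univ_two, Fin.sum_univ_succ, Pi.star_apply,
      RCLike.star_def, Fintype.sum_prod_type, map_mul, Complex.conj_ofReal]
    norm_num
    push_cast [← Complex.ofReal_cos, ← Complex.ofReal_sin]
    simp only [Complex.conj_ofReal]
    linear_combination ((Real.sqrt (1-μ₁) : ℂ)^2 *
      ((Real.sin θ:ℂ)^2 + (Real.cos θ:ℂ)^2 + 1)) * pc + s1 + s1'
  · simp only [Matrix.trace, Matrix.diag, Matrix.mul_apply, Matrix.add_apply,
      Matrix.kroneckerMap_apply, Matrix.vecMulVec_apply, outer, varsigma, varsigmaPerp,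
      ket0, ket1, Phi1, Phi2, Fin.sum_univ_two, Fin.sum_univ_succ, Pi.star_apply,
      RCLike.star_def, Fintype.sum_prod_type, map_mul, Complex.conj_ofReal]
    norm_num
    push_cast [← Complex.ofReal_cos, ← Complex.ofReal_sin]
    simp only [Complex.conj_ofReal]
    linear_combination ((Real.sqrt (1-μ₂) : ℂ)^2 *
      ((Real.sin θ:ℂ)^2 + (Real.cos θ:ℂ)^2 + 1)) * pc + s2 + s2'


end SSDSE17
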